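/- arXiv:math/0303184 — 5 statements merged into one kernel-verified Lean document; each statement's English description precedes it below -/
import Mathlib

section
/- Let X be a type with a scaling action δ of the positive reals (δ 1 = id, δ s ∘ δ r = δ (s·r)), and for w ∈ ℝ let E(w) denote the set of functions F : X → ℝ with F(δ s x) = s^w·F(x) for all s > 0, x ∈ X. Let M be a type, g : M → X, and G := {δ s (g x) : s > 0, x ∈ M}. Fix w ∈ ℝ and let P̃ : (X → ℝ) → (X → ℝ) be ℝ-linear and satisfy: (P̃ F) ∘ δ s = s^w · (P̃ (F ∘ δ s)) for all F and s > 0; P̃ annihilates all constant functions; and for every F ∈ E(0) vanishing identically on G, P̃ F vanishes identically on G. Then for any two everywhere-positive functions t, t' ∈ E(1) with t(g x) = 1 and t'(g x) = 1 for all x ∈ M, the functions P̃ (Real.log ∘ t) and P̃ (Real.log ∘ t') agree at every point of G. In particular the Q-curvature Q_g : M → ℝ, Q_g(x) := −(P̃ (Real.log ∘ t))(g x), is independent of the choice of t. -/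
/-- Well-definedness of the Q-curvature (Theorem 2.2 of Fefferman–Hirachi, abstract setting):
the value of `P̃ (log ∘ t)` on the metric bundle `G` does not depend on the choice of the
conformal scale `t ∈ E(1)` extending the fiber coordinate determined by `g`. -/
theorem Q_curvature_well_defined {X M : Type*} (δ : ℝ → X → X)
    (hδ_one : δ 1 = id)
    (hδ_mul : ∀ s r : ℝ, 0 < s → 0 < r → δ s ∘ δ r = δ (s * r))
    (g : M → X) (w : ℝ)
    (Pt : (X → ℝ) →ₗ[ℝ] (X → ℝ))
    (hPt_equiv : ∀ (F : X → ℝ) (s : ℝ), 0 < s →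
      (Pt F) ∘ δ s = fun x => s ^ w * Pt (F ∘ δ s) x)
    (hPt_const : ∀ c : ℝ, Pt (fun _ => c) = 0)
    (hPt_induce : ∀ F : X → ℝ,
      (∀ (s : ℝ) (x : X), 0 < s → F (δ s x) = F x) →
      (∀ y, (∃ s : ℝ, ∃ x : M, 0 < s ∧ y = δ s (g x)) → F y = 0) →
      ∀ y, (∃ s : ℝ, ∃ x : M, 0 < s ∧ y = δ s (g x)) → Pt F y = 0)
    (t t' : X → ℝ)
    (ht_pos : ∀ y, 0 < t y) (ht'_pos : ∀ y, 0 < t' y)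
    (ht_hom : ∀ (s : ℝ) (x : X), 0 < s → t (δ s x) = s * t x)
    (ht'_hom : ∀ (s : ℝ) (x : X), 0 < s → t' (δ s x) = s * t' x)
    (ht_norm : ∀ x : M, t (g x) = 1)
    (ht'_norm : ∀ x : M, t' (g x) = 1) :
    (∀ y, (∃ s : ℝ, ∃ x : M, 0 < s ∧ y = δ s (g x)) →
      Pt (Real.log ∘ t) y = Pt (Real.log ∘ t') y) ∧
    (fun x : M => -(Pt (Real.log ∘ t) (g x))) =
      (fun x : M => -(Pt (Real.log ∘ t') (g x))) := by
  set F : X → ℝ := fun y => Real.log (t y) - Real.log (t' y) with hF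
  have hmain : ∀ y, (∃ s : ℝ, ∃ x : M, 0 < s ∧ y = δ s (g x)) →
      Pt (Real.log ∘ t) y = Pt (Real.log ∘ t') y := by
    have hinv : ∀ (s : ℝ) (x : X), 0 < s → F (δ s x) = F x := by
      intro s x hs
      simp only [hF, ht_hom s x hs, ht'_hom s x hs,
        Real.log_mul (ne_of_gt hs) (ne_of_gt (ht_pos x)),
        Real.log_mul (ne_of_gt hs) (ne_of_gt (ht'_pos x))]
      ring
    have hvan : ∀ y, (∃ s : ℝ, ∃ x : M, 0 < s ∧ y = δ s (g x)) → F y = 0 := by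
      rintro y ⟨s, x, hs, rfl⟩
      simp [hF, ht_hom s (g x) hs, ht'_hom s (g x) hs, ht_norm x, ht'_norm x]
    have h0 := hPt_induce F hinv hvan
    intro y hy
    have hsub : Pt F = Pt (Real.log ∘ t) - Pt (Real.log ∘ t') := by
      have : F = (Real.log ∘ t) - (Real.log ∘ t') := rfl
      rw [this, map_sub]
    have := h0 y hy
    rw [hsub] at this
    have : Pt (Real.log ∘ t) y - Pt (Real.log ∘ t') y = 0 := this
    linarith
  refine ⟨hmain, funext fun x => ?_⟩
  have := hmain (g x) ⟨1, x, one_pos, by rw [hδ_one]; rfl⟩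
  rw [this]
end

section
/- Let X be a type with a scaling action δ of the positive reals (δ 1 = id, δ s ∘ δ r = δ (s·r)), and for w ∈ ℝ let E(w) denote the set of functions F : X → ℝ with F(δ s x) = s^w·F(x) for all s > 0, x ∈ X. Let M be a type, g : M → X, and G := {δ s (g x) : s > 0, x ∈ M}. Fix w ∈ ℝ and let P̃ : (X → ℝ) → (X → ℝ) be ℝ-linear and satisfy: (P̃ F) ∘ δ s = s^w · (P̃ (F ∘ δ s)) for all F and s > 0; P̃ annihilates all constant functions; and for every F ∈ E(0) vanishing identically on G, P̃ F vanishes identically on G. Let t ∈ E(1) be everywhere positive with t(g x) = 1 for all x, and set Q_g(x) := −(P̃ (Real.log ∘ t))(g x). Let Υ : M → ℝ, let Ỹ ∈ E(0) satisfy Ỹ(g x) = Υ(x) for all x, define ĝ : M → X by ĝ(x) := δ (Real.exp (Υ x)) (g x), and define t̂ : X → ℝ by t̂(y) := Real.exp (−Ỹ(y))·t(y). Then t̂ ∈ E(1), t̂ is everywhere positive, t̂(ĝ x) = 1 for all x, and with Q_ĝ(x) := −(P̃ (Real.log ∘ t̂))(ĝ x), the transformation law Real.exp (−w·Υ(x))·Q_ĝ(x)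 = Q_g(x) + (P̃ Ỹ)(g x) holds for every x ∈ M. -/
/-- Transformation law of the Q-curvature (Theorem 2.2 of Fefferman–Hirachi, abstract setting):
if `gH = e^{2Υ} g` (i.e. `gH x = δ_{e^{Υ x}} (g x)`) and `tH = e^{-Yt} t` for an ambient
extension `Yt ∈ E(0)` of `Υ`, then `tH` is a conformal scale for `gH` and
`e^{-wΥ} Q_gH = Q_g + P_g Υ`. -/
theorem Q_curvature_transformation {X M : Type*} (δ : ℝ → X → X)
    (hδ_one : δ 1 = id)
    (hδ_mul : ∀ s r : ℝ, 0 < s → 0 < r → δ s ∘ δ r = δ (s * r))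
    (g : M → X) (w : ℝ)
    (Pt : (X → ℝ) →ₗ[ℝ] (X → ℝ))
    (hPt_equiv : ∀ (F : X → ℝ) (s : ℝ), 0 < s →
      (Pt F) ∘ δ s = fun x => s ^ w * Pt (F ∘ δ s) x)
    (hPt_const : ∀ c : ℝ, Pt (fun _ => c) = 0)
    (hPt_induce : ∀ F : X → ℝ,
      (∀ (s : ℝ) (x : X), 0 < s → F (δ s x) = F x) →
      (∀ y, (∃ s : ℝ, ∃ x : M, 0 < s ∧ y = δ s (g x)) → F y = 0) →
      ∀ y, (∃ s : ℝ, ∃ x : M, 0 < s ∧ y = δ s (g x)) → Pt F y = 0)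
    (t : X → ℝ)
    (ht_pos : ∀ y, 0 < t y)
    (ht_hom : ∀ (s : ℝ) (x : X), 0 < s → t (δ s x) = s * t x)
    (ht_norm : ∀ x : M, t (g x) = 1)
    (Υ : M → ℝ) (Yt : X → ℝ)
    (hYt_hom : ∀ (s : ℝ) (x : X), 0 < s → Yt (δ s x) = Yt x)
    (hYt_ext : ∀ x : M, Yt (g x) = Υ x) :
    let tH : X → ℝ := fun y => Real.exp (-(Yt y)) * t y
    let gH : M → X := fun x => δ (Real.exp (Υ x)) (g x)
    (∀ (s : ℝ) (y : X), 0 < s → tH (δ s y) = s * tH y) ∧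
    (∀ y, 0 < tH y) ∧
    (∀ x : M, tH (gH x) = 1) ∧
    (∀ x : M,
      Real.exp (-(w * Υ x)) * (-(Pt (Real.log ∘ tH) (gH x))) =
        -(Pt (Real.log ∘ t) (g x)) + Pt Yt (g x)) := by
  intro tH gH
  have htH_hom : ∀ (s : ℝ) (y : X), 0 < s → tH (δ s y) = s * tH y := by
    intro s y hs
    simp only [tH, hYt_hom s y hs, ht_hom s y hs]
    ring
  have htH_pos : ∀ y, 0 < tH y := fun y =>
    mul_pos (Real.exp_pos _) (ht_pos y)
  have htH_norm : ∀ x : M, tH (gH x) = 1 := by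
    intro x
    show tH (δ (Real.exp (Υ x)) (g x)) = 1
    rw [htH_hom _ _ (Real.exp_pos _)]
    show Real.exp (Υ x) * (Real.exp (-Yt (g x)) * t (g x)) = 1
    rw [hYt_ext, ht_norm, mul_one, ← Real.exp_add]
    simp
  refine ⟨htH_hom, htH_pos, htH_norm, ?_⟩
  intro x
  -- log ∘ tH = log ∘ t - Yt
  have hlog : (Real.log ∘ tH) = (Real.log ∘ t) - Yt := by
    funext y
    simp only [Function.comp, tH, Pi.sub_apply]
    rw [Real.log_mul (Real.exp_ne_zero _) (ht_pos y).ne', Real.log_exp]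
    ring
  set s := Real.exp (Υ x) with hs_def
  have hs : (0:ℝ) < s := Real.exp_pos _
  -- equivariance at gH x
  have hcomp : (Real.log ∘ tH) ∘ δ s = (fun _ => Real.log s) + (Real.log ∘ tH) := by
    funext y
    simp only [Function.comp, Pi.add_apply]
    rw [htH_hom s y hs, Real.log_mul hs.ne' (htH_pos y).ne']
  have hval : Pt (Real.log ∘ tH) (gH x) = s ^ w * Pt (Real.log ∘ tH) (g x) := by
    have h1 := congrFun (hPt_equiv (Real.log ∘ tH) s hs) (g x)
    simp only [Function.comp_apply] at h1
    have h2 : Pt ((Real.log ∘ tH) ∘ δ s) = Pt (Real.log ∘ tH) := by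
      rw [hcomp, map_add, hPt_const (Real.log s)]
      simp
    rw [h2] at h1
    exact h1
  have hsub : Pt (Real.log ∘ tH) (g x) =
      Pt (Real.log ∘ t) (g x) - Pt Yt (g x) := by
    rw [hlog, map_sub]; rfl
  have hsw : s ^ w = Real.exp (w * Υ x) := by
    rw [hs_def, ← Real.exp_mul, mul_comm]
  rw [hval, hsub, hsw, Real.exp_neg]
  have : Real.exp (w * Υ x) ≠ 0 := Real.exp_ne_zero _
  field_simp
  ring
end

section
/- Let X be a type with a scaling action δ of the positive reals (δ 1 = id, δ s ∘ δ r = δ (s·r)), and for v ∈ ℝ let E(v) denote the set of functions F : X → ℝ with F(δ s x) = s^v·F(x) for all s > 0, x ∈ X. Fix n ∈ ℝ, let ρ̃ ∈ E(2), and let Δ̃ : (X → ℝ) → (X → ℝ) be ℝ-linear satisfying: (Δ̃ F) ∘ δ s = s^{−2} · (Δ̃ (F ∘ δ s)) for all F and s > 0, and the commutation relation Δ̃(ρ̃·F) = ρ̃·(Δ̃ F) − (4v + 2n + 4)·F for every v ∈ ℝ and every F ∈ E(v). Then for every integer m ≥ 1, every v ∈ ℝ, and every G ∈ E(v), one has Δ̃(ρ̃^m·G)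 = ρ̃^m·(Δ̃ G) − 4m·(v + m + n/2)·ρ̃^{m−1}·G. -/
/-- Iterated ambient commutator identity (GJMS (1.3)–(1.6), underlying Lemma 2.1 of
Fefferman–Hirachi): from `Δ̃(ρ̃ F) = ρ̃ Δ̃ F − (4v + 2n + 4) F` for `F ∈ E(v)` one gets
`Δ̃(ρ̃^m G) = ρ̃^m Δ̃ G − 4m(v + m + n/2) ρ̃^{m-1} G` for `G ∈ E(v)` and `m ≥ 1`. -/
theorem iterated_ambient_commutator {X : Type*} (δ : ℝ → X → X)
    (hδ_one : δ 1 = id)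
    (hδ_mul : ∀ s r : ℝ, 0 < s → 0 < r → δ s ∘ δ r = δ (s * r))
    (n : ℝ) (ρ : X → ℝ)
    (hρ_hom : ∀ (s : ℝ) (x : X), 0 < s → ρ (δ s x) = s ^ (2 : ℝ) * ρ x)
    (Δt : (X → ℝ) →ₗ[ℝ] (X → ℝ))
    (hΔ_equiv : ∀ (F : X → ℝ) (s : ℝ), 0 < s →
      (Δt F) ∘ δ s = fun x => s ^ (-2 : ℝ) * Δt (F ∘ δ s) x)
    (hΔ_comm : ∀ (v : ℝ) (F : X → ℝ),
      (∀ (s : ℝ) (x : X), 0 < s → F (δ s x) = s ^ v * F x) →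
      Δt (fun x => ρ x * F x) =
        fun x => ρ x * Δt F x - (4 * v + 2 * n + 4) * F x) :
    ∀ (m : ℕ), 1 ≤ m → ∀ (v : ℝ) (G : X → ℝ),
      (∀ (s : ℝ) (x : X), 0 < s → G (δ s x) = s ^ v * G x) →
      Δt (fun x => ρ x ^ m * G x) =
        fun x => ρ x ^ m * Δt G x
          - 4 * m * (v + m + n / 2) * ρ x ^ (m - 1) * G x := by
  intro m
  induction m with
  | zero => omega
  | succ k ih =>
    intro _ v G hG
    -- ρ^k * G is homogeneous of degree v + 2k
    have hhom : ∀ (s : ℝ) (x : X), 0 < s →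
        (fun x => ρ x ^ k * G x) (δ s x) = s ^ (v + 2 * k) * (fun x => ρ x ^ k * G x) x := by
      intro s x hs
      simp only
      rw [hρ_hom s x hs, hG s x hs, mul_pow, ← Real.rpow_natCast (s ^ (2:ℝ)) k,
        ← Real.rpow_mul hs.le]
      rw [show s ^ ((2:ℝ) * k) * ρ x ^ k * (s ^ v * G x)
          = (s ^ ((2:ℝ) * k) * s ^ v) * (ρ x ^ k * G x) by ring,
        ← Real.rpow_add hs]
      ring_nf
    have hcomm := hΔ_comm (v + 2 * k) (fun x => ρ x ^ k * G x) hhom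
    by_cases hk : k = 0
    · subst hk
      simp only [pow_zero, one_mul] at hcomm ⊢
      rw [show (fun x => ρ x ^ 1 * G x) = (fun x => ρ x * G x) by
        funext x; rw [pow_one]]
      rw [hcomm]
      funext x
      push_cast
      ring
    · have hk1 : 1 ≤ k := Nat.one_le_iff_ne_zero.mpr hk
      rw [ih hk1 v G hG] at hcomm
      rw [show (fun x => ρ x ^ (k+1) * G x) = (fun x => ρ x * (ρ x ^ k * G x)) by
        funext x; rw [pow_succ]; ring]
      rw [hcomm]
      funext x
      simp only [Nat.add_sub_cancel]
      have hρk : ρ x ^ k = ρ x ^ (k-1) * ρ x := by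
        conv_lhs => rw [show k = (k-1)+1 by omega]
        rw [pow_succ]
      rw [pow_succ, hρk]
      push_cast
      ring
end

section
/- Let X be a type with a scaling action δ of the positive reals (δ 1 = id, δ s ∘ δ r = δ (s·r)), and for v ∈ ℝ let E(v) denote the set of functions F : X → ℝ with F(δ s x) = s^v·F(x) for all s > 0, x ∈ X. Fix n ∈ ℝ, let ρ̃ ∈ E(2), and let Δ̃ : (X → ℝ) → (X → ℝ) be ℝ-linear satisfying: (Δ̃ F) ∘ δ s = s^{−2} · (Δ̃ (F ∘ δ s)) for all F and s > 0, and Δ̃(ρ̃·F) = ρ̃·(Δ̃ F) − (4v + 2n + 4)·F for every v ∈ ℝ and F ∈ E(v). Let w ∈ ℝ, set k := n/2 + w, let m ≥ 1 be an integer with k ≠ l for every integer l with 1 ≤ l ≤ m, and let f̃ ∈ E(w). Define E_l(F) := F + (4l(k−l))^{−1}·ρ̃·(Δ̃ F) and f̃_m := E_m(E_{m−1}(⋯(E_1(f̃))⋯)). Then: (i) f̃_m ∈ E(w); (ii) f̃_m(x) = f̃(x) at every point x with ρ̃(x) = 0; and (iii) Δ̃ f̃_m = (∏_{l=1}^{m}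 (4l(k−l))^{−1}) · ρ̃^m · (Δ̃^{m+1} f̃). In particular Δ̃ f̃_m is ρ̃^m times a function, i.e. Δ̃ f̃_m = O(ρ̃^m). -/
/-- The iterated correction operators of Lemma 2.1 of Fefferman–Hirachi:
`harmExt ρ Δ k 0 f = f` and
`harmExt ρ Δ k (m+1) f = E_{m+1} (harmExt ρ Δ k m f)` where
`E_l F = F + (4 l (k - l))⁻¹ ρ̃ Δ̃ F`, so `harmExt ρ Δ k m f = E_m E_{m-1} ⋯ E_1 f`. -/
noncomputable def harmExt {X : Type*} (ρ : X → ℝ) (Δ : (X → ℝ) → (X → ℝ)) (k : ℝ) :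
    ℕ → (X → ℝ) → (X → ℝ)
  | 0, f => f
  | (m + 1), f => fun x =>
      harmExt ρ Δ k m f x
        + (4 * ((m : ℝ) + 1) * (k - ((m : ℝ) + 1)))⁻¹ * ρ x * Δ (harmExt ρ Δ k m f) x

lemma harmExt_zero {X : Type*} (ρ : X → ℝ) (Δ : (X → ℝ) → (X → ℝ)) (k : ℝ) (f : X → ℝ) :
    harmExt ρ Δ k 0 f = f := rfl

lemma harmExt_succ {X : Type*} (ρ : X → ℝ) (Δ : (X → ℝ) → (X → ℝ)) (k : ℝ) (m : ℕ)
    (f : X → ℝ) :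
    harmExt ρ Δ k (m + 1) f = fun x =>
      harmExt ρ Δ k m f x
        + (4 * ((m : ℝ) + 1) * (k - ((m : ℝ) + 1)))⁻¹ * ρ x * Δ (harmExt ρ Δ k m f) x := rfl

/-- Existence half of Lemma 2.1 of Fefferman–Hirachi (Proposition 2.2 of GJMS):
for `f̃ ∈ E(w)`, `k = n/2 + w`, and `k ∉ {1, …, m}`, the density
`f̃_m = E_m ⋯ E_1 f̃` lies in `E(w)`, agrees with `f̃` on `{ρ̃ = 0}`, and satisfies
`Δ̃ f̃_m = (∏_{l=1}^m (4l(k-l))⁻¹) ρ̃^m Δ̃^{m+1} f̃`; in particular `Δ̃ f̃_m = O(ρ̃^m)`. -/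
theorem harmonic_extension_of_densities {X : Type*} (δ : ℝ → X → X)
    (hδ_one : δ 1 = id)
    (hδ_mul : ∀ s r : ℝ, 0 < s → 0 < r → δ s ∘ δ r = δ (s * r))
    (n : ℝ) (ρ : X → ℝ)
    (hρ_hom : ∀ (s : ℝ) (x : X), 0 < s → ρ (δ s x) = s ^ (2 : ℝ) * ρ x)
    (Δt : (X → ℝ) →ₗ[ℝ] (X → ℝ))
    (hΔ_equiv : ∀ (F : X → ℝ) (s : ℝ), 0 < s →
      (Δt F) ∘ δ s = fun x => s ^ (-2 : ℝ) * Δt (F ∘ δ s) x)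
    (hΔ_comm : ∀ (v : ℝ) (F : X → ℝ),
      (∀ (s : ℝ) (x : X), 0 < s → F (δ s x) = s ^ v * F x) →
      Δt (fun x => ρ x * F x) =
        fun x => ρ x * Δt F x - (4 * v + 2 * n + 4) * F x)
    (w : ℝ) (k : ℝ) (hk : k = n / 2 + w)
    (m : ℕ) (hm : 1 ≤ m)
    (hk_not_int : ∀ l : ℕ, 1 ≤ l → l ≤ m → k ≠ (l : ℝ))
    (f : X → ℝ)
    (hf_hom : ∀ (s : ℝ) (x : X), 0 < s → f (δ s x) = s ^ w * f x) :
    (∀ (s : ℝ) (x : X), 0 < s →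
        harmExt ρ (⇑Δt) k m f (δ s x) = s ^ w * harmExt ρ (⇑Δt) k m f x) ∧
    (∀ x : X, ρ x = 0 → harmExt ρ (⇑Δt) k m f x = f x) ∧
    (Δt (harmExt ρ (⇑Δt) k m f) =
      fun x => (∏ l ∈ Finset.Icc 1 m, (4 * (l : ℝ) * (k - (l : ℝ)))⁻¹)
        * ρ x ^ m * (⇑Δt)^[m + 1] f x) ∧
    (∃ h : X → ℝ, Δt (harmExt ρ (⇑Δt) k m f) = fun x => ρ x ^ m * h x) := by
  -- Step 1: Δ lowers the weight of a homogeneous function by 2.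
  have hΔhom : ∀ (F : X → ℝ) (v : ℝ),
      (∀ (s : ℝ) (x : X), 0 < s → F (δ s x) = s ^ v * F x) →
      ∀ (s : ℝ) (x : X), 0 < s → Δt F (δ s x) = s ^ (v - 2) * Δt F x := by
    intro F v hF s x hs
    have hFs : F ∘ δ s = (s ^ v : ℝ) • F := by
      funext y
      simp [Function.comp, hF s y hs, smul_eq_mul]
    have h1 := congrFun (hΔ_equiv F s hs) x
    rw [hFs, map_smul] at h1
    have h2 : Δt F (δ s x) = s ^ (-2 : ℝ) * (s ^ v * Δt F x) := by
      simpa [smul_eq_mul] using h1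
    rw [h2, ← mul_assoc, ← Real.rpow_add hs, show (-2 : ℝ) + v = v - 2 by ring]
  -- Step 2: the iterates of Δ on f are homogeneous.
  have hgj : ∀ j : ℕ, ∀ (s : ℝ) (x : X), 0 < s →
      (⇑Δt)^[j] f (δ s x) = s ^ (w - 2 * (j : ℝ)) * (⇑Δt)^[j] f x := by
    intro j
    induction j with
    | zero => intro s x hs; simpa using hf_hom s x hs
    | succ j ih =>
      intro s x hs
      rw [Function.iterate_succ_apply',
        hΔhom ((⇑Δt)^[j] f) (w - 2 * (j : ℝ)) ih s x hs,
        show w - 2 * (j : ℝ) - 2 = w - 2 * ((j + 1 : ℕ) : ℝ) by push_cast; ring]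
  -- homogeneity of ρ^j * g
  have hρpow_hom : ∀ (g : X → ℝ) (v : ℝ),
      (∀ (s : ℝ) (x : X), 0 < s → g (δ s x) = s ^ v * g x) →
      ∀ j : ℕ, ∀ (s : ℝ) (x : X), 0 < s →
        (fun x => ρ x ^ j * g x) (δ s x) = s ^ (v + 2 * (j : ℝ)) *
          (fun x => ρ x ^ j * g x) x := by
    intro g v hg j s x hs
    simp only
    rw [hρ_hom s x hs, hg s x hs, mul_pow, ← Real.rpow_natCast (s ^ (2 : ℝ)) j,
      ← Real.rpow_mul hs.le,
      show s ^ ((2 : ℝ) * (j : ℝ)) * ρ x ^ j * (s ^ v * g x)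
        = s ^ ((2 : ℝ) * (j : ℝ)) * s ^ v * (ρ x ^ j * g x) by ring,
      ← Real.rpow_add hs, show (2 : ℝ) * (j : ℝ) + v = v + 2 * (j : ℝ) by ring]
  -- Step 3: commutation of Δ with multiplication by powers of ρ.
  have hpow : ∀ (g : X → ℝ) (v : ℝ),
      (∀ (s : ℝ) (x : X), 0 < s → g (δ s x) = s ^ v * g x) →
      ∀ j : ℕ,
        Δt (fun x => ρ x ^ (j + 1) * g x) =
          fun x => ρ x ^ (j + 1) * Δt g x
            - 4 * ((j : ℝ) + 1) * (v + n / 2 + ((j : ℝ) + 1)) * ρ x ^ j * g x := by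
    intro g v hg j
    induction j with
    | zero =>
      have e1 : (fun x => ρ x ^ (0 + 1) * g x) = (fun x => ρ x * g x) := by
        funext x; ring
      rw [e1, hΔ_comm v g hg]
      funext x
      push_cast
      ring
    | succ j ih =>
      have hj := hρpow_hom g v hg (j + 1)
      have hc := hΔ_comm (v + 2 * ((j + 1 : ℕ) : ℝ)) (fun x => ρ x ^ (j + 1) * g x) hj
      have e1 : (fun x => ρ x ^ (j + 1 + 1) * g x)
          = (fun x => ρ x * (ρ x ^ (j + 1) * g x)) := by
        funext x; ring
      rw [e1, hc, ih]
      funext x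
      push_cast
      ring
  -- agreement with f on the zero set of ρ
  have hzero : ∀ M : ℕ, ∀ x : X, ρ x = 0 → harmExt ρ (⇑Δt) k M f x = f x := by
    intro M
    induction M with
    | zero => intro x _; rfl
    | succ M ih =>
      intro x hx
      rw [harmExt_succ]
      simp only [hx, mul_zero, zero_mul, add_zero]
      exact ih x hx
  -- main induction: homogeneity and the formula for Δ of the extension
  have main : ∀ M : ℕ, (∀ l : ℕ, 1 ≤ l → l ≤ M → k ≠ (l : ℝ)) →
      (∀ (s : ℝ) (x : X), 0 < s →
          harmExt ρ (⇑Δt) k M f (δ s x) = s ^ w * harmExt ρ (⇑Δt) k M f x) ∧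
      (Δt (harmExt ρ (⇑Δt) k M f) =
        fun x => (∏ l ∈ Finset.Icc 1 M, (4 * (l : ℝ) * (k - (l : ℝ)))⁻¹)
          * ρ x ^ M * (⇑Δt)^[M + 1] f x) := by
    intro M
    induction M with
    | zero =>
      intro _
      refine ⟨fun s x hs => hf_hom s x hs, ?_⟩
      funext x
      rw [harmExt_zero]
      simp
    | succ M ih =>
      intro hknot
      obtain ⟨ihhom, ihΔ⟩ := ih (fun l h1 h2 => hknot l h1 (h2.trans (Nat.le_succ M)))
      have hΔFM : ∀ (s : ℝ) (x : X), 0 < s →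
          Δt (harmExt ρ (⇑Δt) k M f) (δ s x)
            = s ^ (w - 2) * Δt (harmExt ρ (⇑Δt) k M f) x :=
        hΔhom _ w ihhom
      constructor
      · intro s x hs
        rw [harmExt_succ]
        simp only
        rw [ihhom s x hs, hρ_hom s x hs, hΔFM s x hs]
        have h2 : s ^ (2 : ℝ) * s ^ (w - 2) = s ^ w := by
          rw [← Real.rpow_add hs]; norm_num
        linear_combination ((4 * ((M : ℝ) + 1) * (k - ((M : ℝ) + 1)))⁻¹ * ρ x
          * Δt (harmExt ρ (⇑Δt) k M f) x) * h2
      · -- the Laplacian formula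
        set c : ℝ := ∏ l ∈ Finset.Icc 1 M, (4 * (l : ℝ) * (k - (l : ℝ)))⁻¹ with hc
        set a : ℝ := (4 * ((M : ℝ) + 1) * (k - ((M : ℝ) + 1)))⁻¹ with ha
        set g : X → ℝ := (⇑Δt)^[M + 1] f with hgdef
        have hghom : ∀ (s : ℝ) (x : X), 0 < s →
            g (δ s x) = s ^ (w - 2 * ((M : ℝ) + 1)) * g x := by
          intro s x hs
          have := hgj (M + 1) s x hs
          rwa [show ((M + 1 : ℕ) : ℝ) = (M : ℝ) + 1 by push_cast; ring] at this
        have hΔpow := hpow g (w - 2 * ((M : ℝ) + 1)) hghom M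
        have hsplit : harmExt ρ (⇑Δt) k (M + 1) f
            = harmExt ρ (⇑Δt) k M f + a • (fun x => ρ x * Δt (harmExt ρ (⇑Δt) k M f) x) := by
          funext x
          rw [harmExt_succ]
          simp only [Pi.add_apply, Pi.smul_apply, smul_eq_mul, ← ha]
          ring
        have hG : (fun x => ρ x * Δt (harmExt ρ (⇑Δt) k M f) x)
            = c • (fun x => ρ x ^ (M + 1) * g x) := by
          funext x
          rw [congrFun ihΔ x]
          simp only [Pi.smul_apply, smul_eq_mul, ← hc, ← hgdef]
          ring
        have hBne : (4 * ((M : ℝ) + 1) * (k - ((M : ℝ) + 1))) ≠ 0 := by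
          have h1 : k ≠ ((M + 1 : ℕ) : ℝ) := hknot (M + 1) (by omega) (le_refl _)
          have h2 : k - ((M : ℝ) + 1) ≠ 0 := by
            intro h
            apply h1
            push_cast
            linarith [sub_eq_zero.mp h]
          have h3 : (4 : ℝ) * ((M : ℝ) + 1) ≠ 0 := by positivity
          exact mul_ne_zero h3 h2
        have haB : a * (4 * ((M : ℝ) + 1) * (k - ((M : ℝ) + 1))) = 1 :=
          inv_mul_cancel₀ hBne
        have hprod : ∏ l ∈ Finset.Icc 1 (M + 1), (4 * (l : ℝ) * (k - (l : ℝ)))⁻¹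
            = c * a := by
          rw [Finset.prod_Icc_succ_top (by omega : 1 ≤ M + 1)]
          rw [← hc, ha]
          push_cast
          ring
        rw [hsplit, map_add, map_smul, hG, map_smul, hΔpow, ihΔ]
        funext x
        simp only [Pi.add_apply, Pi.smul_apply, smul_eq_mul, hprod, ← hgdef,
          Function.iterate_succ_apply']
        have hB' : w - 2 * ((M : ℝ) + 1) + n / 2 + ((M : ℝ) + 1) = k - ((M : ℝ) + 1) := by
          rw [hk]; ring
        rw [hB']
        linear_combination (-(c * ρ x ^ M * g x)) * haB
  obtain ⟨h1, h2⟩ := main m hk_not_int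
  exact ⟨h1, hzero m, h2,
    ⟨fun x => (∏ l ∈ Finset.Icc 1 m, (4 * (l : ℝ) * (k - (l : ℝ)))⁻¹) * (⇑Δt)^[m + 1] f x,
      by rw [h2]; funext x; ring⟩⟩
end

section
/- Let N ≥ 1 be a natural number. For a function h : (Fin (N+1) → ℂ) → ℂ that is differentiable over ℝ, define the Wirtinger derivatives ∂_j h(z) := (1/2)·(fderiv ℝ h z (e j) − Complex.I · fderiv ℝ h z (Complex.I • e j)) and ∂̄_j h(z) := (1/2)·(fderiv ℝ h z (e j) + Complex.I · fderiv ℝ h z (Complex.I • e j)), where e j is the j-th standard basis vector; define Wirtinger derivatives on (Fin N → ℂ) analogously. Let u : (Fin N → ℂ) → ℂ be twice continuously differentiable over ℝ, and define r : (Fin (N+1) → ℂ) → ℂ by r(z) := z 0 · conj (z 0) · u(z ∘ Fin.succ). Then for every z ∈ Fin (N+1) → ℂ, writing z' := z ∘ Fin.succ, the (N+1) × (N+1) complex Hessian matrix M with entries M j k := ∂_j (∂̄_k r)(z) satisfies det M = (z 0 · conj (z 0))^N · det B, where B is the (N+1) × (N+1) bordered Hessian of u at z': B 0 0 = u(z'),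 B 0 k = ∂̄_k u(z') for 1 ≤ k ≤ N, B j 0 = ∂_j u(z') for 1 ≤ j ≤ N, and B j k = ∂_j(∂̄_k u)(z') for 1 ≤ j, k ≤ N. -/
/-
`∂̄` annihilates `z₀`, `∂̄₀ z̄₀ = 1`, and the derivatives in the directions of `z'` do not see
`z₀`; so by the Leibniz rule `∂̄₀ r = z₀ u(z')` and `∂̄ₖ r = |z₀|² ∂̄ₖ u(z')` for `k ≥ 1`.
Differentiating once more, the complex Hessian of `r` is
`diag(1, z₀, …, z₀) · B · diag(1, z̄₀, …, z̄₀)`, whose determinant is `z₀ᴺ z̄₀ᴺ det B`.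
-/

open Complex

/-- Wirtinger derivative `∂_j h (z) = ½ (∂h/∂x_j − i ∂h/∂y_j)` of a function
`h : (Fin n → ℂ) → ℂ`, expressed via real Fréchet derivatives in the directions
`e_j` and `i • e_j`. -/
noncomputable def wirtingerD {n : ℕ} (h : (Fin n → ℂ) → ℂ) (j : Fin n)
    (z : Fin n → ℂ) : ℂ :=
  (1 / 2) * (fderiv ℝ h z (Pi.single j 1) -
    Complex.I * fderiv ℝ h z (Complex.I • (Pi.single j 1 : Fin n → ℂ)))

/-- Conjugate Wirtinger derivative `∂̄_j h (z) = ½ (∂h/∂x_j + i ∂h/∂y_j)`. -/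
noncomputable def wirtingerDBar {n : ℕ} (h : (Fin n → ℂ) → ℂ) (j : Fin n)
    (z : Fin n → ℂ) : ℂ :=
  (1 / 2) * (fderiv ℝ h z (Pi.single j 1) +
    Complex.I * fderiv ℝ h z (Complex.I • (Pi.single j 1 : Fin n → ℂ)))

open ComplexConjugate

section Wirtinger
variable {n : ℕ} {f g : (Fin n → ℂ) → ℂ} {z : Fin n → ℂ}

theorem wirtingerD_mul (hf : DifferentiableAt ℝ f z) (hg : DifferentiableAt ℝ g z)
    (j : Fin n) :
    wirtingerD (fun w => f w * g w) j z = wirtingerD f j z * g z + f z * wirtingerD g j z := by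
  simp only [wirtingerD, fderiv_fun_mul hf hg, add_apply, smul_apply, smul_eq_mul]
  ring

theorem wirtingerDBar_mul (hf : DifferentiableAt ℝ f z) (hg : DifferentiableAt ℝ g z)
    (j : Fin n) :
    wirtingerDBar (fun w => f w * g w) j z =
      wirtingerDBar f j z * g z + f z * wirtingerDBar g j z := by
  simp only [wirtingerDBar, fderiv_fun_mul hf hg, add_apply, smul_apply, smul_eq_mul]
  ring

theorem wirtingerD_coord (i j : Fin n) :
    wirtingerD (fun w => w i) j z = if i = j then 1 else 0 := by
  simp [wirtingerD, (hasFDerivAt_apply i z).fderiv, Pi.single_apply, eq_comm]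
  split_ifs <;> norm_num

theorem wirtingerDBar_coord (i j : Fin n) :
    wirtingerDBar (fun w => w i) j z = 0 := by
  simp [wirtingerDBar, (hasFDerivAt_apply i z).fderiv, Pi.single_apply]
  split_ifs <;> norm_num

theorem hasFDerivAt_conj_apply (i : Fin n) :
    HasFDerivAt (fun w : Fin n → ℂ => conj (w i))
      ((starL' ℝ : ℂ ≃L[ℝ] ℂ).toContinuousLinearMap ∘L ContinuousLinearMap.proj i) z :=
  (hasFDerivAt_apply (F' := fun _ => ℂ) i z).star

theorem wirtingerD_conj_coord (i j : Fin n) :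
    wirtingerD (fun w => conj (w i)) j z = 0 := by
  simp [wirtingerD, (hasFDerivAt_conj_apply i).fderiv, Pi.single_apply]
  split_ifs <;> simp

theorem wirtingerDBar_conj_coord (i j : Fin n) :
    wirtingerDBar (fun w => conj (w i)) j z = if i = j then 1 else 0 := by
  simp [wirtingerDBar, (hasFDerivAt_conj_apply i).fderiv, Pi.single_apply, eq_comm]
  split_ifs <;> norm_num

end Wirtinger

section CompSucc
variable {n : ℕ}

theorem single_zero_comp_succ {M : Type*} [Zero M] (x : M) :
    (Pi.single 0 x : Fin (n + 1) → M) ∘ Fin.succ = 0 := by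
  funext i
  simp [Fin.succ_ne_zero]

theorem single_succ_comp_succ {M : Type*} [Zero M] (j : Fin n) (x : M) :
    (Pi.single j.succ x : Fin (n + 1) → M) ∘ Fin.succ = Pi.single j x := by
  funext i
  simp [Pi.single_apply]

variable {f : (Fin n → ℂ) → ℂ} {z : Fin (n + 1) → ℂ}

theorem fderiv_comp_succ_apply (hf : DifferentiableAt ℝ f (z ∘ Fin.succ))
    (v : Fin (n + 1) → ℂ) :
    fderiv ℝ (fun w => f (w ∘ Fin.succ)) z v = fderiv ℝ f (z ∘ Fin.succ) (v ∘ Fin.succ) := by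
  have htail := (ContinuousLinearMap.pi fun i : Fin n =>
    ContinuousLinearMap.proj (R := ℝ) (φ := fun _ => ℂ) i.succ).hasFDerivAt (x := z)
  exact congrArg (· v) (hf.hasFDerivAt.comp z htail).fderiv

theorem wirtingerD_comp_succ_zero (hf : DifferentiableAt ℝ f (z ∘ Fin.succ)) :
    wirtingerD (fun w => f (w ∘ Fin.succ)) 0 z = 0 := by
  simp only [wirtingerD, fderiv_comp_succ_apply hf]
  simp [Pi.smul_comp, single_zero_comp_succ]

theorem wirtingerD_comp_succ_succ (hf : DifferentiableAt ℝ f (z ∘ Fin.succ)) (j : Fin n) :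
    wirtingerD (fun w => f (w ∘ Fin.succ)) j.succ z = wirtingerD f j (z ∘ Fin.succ) := by
  simp only [wirtingerD, fderiv_comp_succ_apply hf]
  simp [Pi.smul_comp, single_succ_comp_succ]

theorem wirtingerDBar_comp_succ_zero (hf : DifferentiableAt ℝ f (z ∘ Fin.succ)) :
    wirtingerDBar (fun w => f (w ∘ Fin.succ)) 0 z = 0 := by
  simp only [wirtingerDBar, fderiv_comp_succ_apply hf]
  simp [Pi.smul_comp, single_zero_comp_succ]

theorem wirtingerDBar_comp_succ_succ (hf : DifferentiableAt ℝ f (z ∘ Fin.succ)) (j : Fin n) :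
    wirtingerDBar (fun w => f (w ∘ Fin.succ)) j.succ z = wirtingerDBar f j (z ∘ Fin.succ) := by
  simp only [wirtingerDBar, fderiv_comp_succ_apply hf]
  simp [Pi.smul_comp, single_succ_comp_succ]

end CompSucc

theorem ContDiff.differentiable_wirtingerDBar {n : ℕ} {u : (Fin n → ℂ) → ℂ}
    (hu : ContDiff ℝ 2 u) (k : Fin n) : Differentiable ℝ (wirtingerDBar u k) := by
  have := (hu.fderiv_right (m := 1) (by norm_num)).differentiable (by norm_num)
  unfold wirtingerDBar
  fun_prop

noncomputable def ambientPotential {n : ℕ} (u : (Fin n → ℂ) → ℂ) : (Fin (n + 1) → ℂ) → ℂ :=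
  fun v => v 0 * conj (v 0) * u (v ∘ Fin.succ)

noncomputable def complexHessian {n : ℕ} (h : (Fin n → ℂ) → ℂ) (z : Fin n → ℂ) :
    Matrix (Fin n) (Fin n) ℂ :=
  Matrix.of fun j k => wirtingerD (wirtingerDBar h k) j z

noncomputable def borderedHessian {n : ℕ} (u : (Fin n → ℂ) → ℂ) (z : Fin n → ℂ) :
    Matrix (Fin (n + 1)) (Fin (n + 1)) ℂ :=
  Matrix.of fun j k =>
    Fin.cases (Fin.cases (u z) (fun k' => wirtingerDBar u k' z) k)
      (fun j' => Fin.cases (wirtingerD u j' z)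
        (fun k' => wirtingerD (wirtingerDBar u k') j' z) k) j

section AmbientPotential
variable {n : ℕ} {u : (Fin n → ℂ) → ℂ} {z : Fin (n + 1) → ℂ}

theorem wirtingerDBar_ambientPotential_zero (hu : Differentiable ℝ u) :
    wirtingerDBar (ambientPotential u) 0 = fun w => w 0 * u (w ∘ Fin.succ) := by
  funext w
  unfold ambientPotential
  rw [wirtingerDBar_mul (by fun_prop) (by fun_prop),
    wirtingerDBar_mul (by fun_prop) (by fun_prop), wirtingerDBar_coord,
    wirtingerDBar_conj_coord, wirtingerDBar_comp_succ_zero (hu _)]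
  simp

theorem wirtingerDBar_ambientPotential_succ (hu : Differentiable ℝ u) (k : Fin n) :
    wirtingerDBar (ambientPotential u) k.succ = ambientPotential (wirtingerDBar u k) := by
  funext w
  unfold ambientPotential
  rw [wirtingerDBar_mul (by fun_prop) (by fun_prop),
    wirtingerDBar_mul (by fun_prop) (by fun_prop), wirtingerDBar_coord,
    wirtingerDBar_conj_coord, wirtingerDBar_comp_succ_succ (hu _)]
  simp [(Fin.succ_ne_zero k).symm]

theorem wirtingerD_ambientPotential_zero (hu : DifferentiableAt ℝ u (z ∘ Fin.succ)) :
    wirtingerD (ambientPotential u) 0 z = conj (z 0) * u (z ∘ Fin.succ) := by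
  unfold ambientPotential
  rw [wirtingerD_mul (by fun_prop) (by fun_prop),
    wirtingerD_mul (by fun_prop) (by fun_prop), wirtingerD_coord,
    wirtingerD_conj_coord, wirtingerD_comp_succ_zero hu]
  simp

theorem wirtingerD_ambientPotential_succ (hu : DifferentiableAt ℝ u (z ∘ Fin.succ))
    (j : Fin n) :
    wirtingerD (ambientPotential u) j.succ z =
      z 0 * conj (z 0) * wirtingerD u j (z ∘ Fin.succ) := by
  unfold ambientPotential
  rw [wirtingerD_mul (by fun_prop) (by fun_prop),
    wirtingerD_mul (by fun_prop) (by fun_prop), wirtingerD_coord,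
    wirtingerD_conj_coord, wirtingerD_comp_succ_succ hu]
  simp [(Fin.succ_ne_zero j).symm]

theorem wirtingerD_head_mul_comp_succ_zero (hu : DifferentiableAt ℝ u (z ∘ Fin.succ)) :
    wirtingerD (fun w => w 0 * u (w ∘ Fin.succ)) 0 z = u (z ∘ Fin.succ) := by
  rw [wirtingerD_mul (by fun_prop) (by fun_prop), wirtingerD_coord,
    wirtingerD_comp_succ_zero hu]
  simp

theorem wirtingerD_head_mul_comp_succ_succ (hu : DifferentiableAt ℝ u (z ∘ Fin.succ))
    (j : Fin n) :
    wirtingerD (fun w => w 0 * u (w ∘ Fin.succ)) j.succ z =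
      z 0 * wirtingerD u j (z ∘ Fin.succ) := by
  rw [wirtingerD_mul (by fun_prop) (by fun_prop), wirtingerD_coord,
    wirtingerD_comp_succ_succ hu]
  simp [(Fin.succ_ne_zero j).symm]

theorem complexHessian_ambientPotential (hu : ContDiff ℝ 2 u) :
    complexHessian (ambientPotential u) z =
      Matrix.diagonal (Fin.cons 1 fun _ => z 0) * borderedHessian u (z ∘ Fin.succ) *
        Matrix.diagonal (Fin.cons 1 fun _ => conj (z 0)) := by
  have hdiff : Differentiable ℝ u := hu.differentiable (by norm_num)
  ext j k
  rw [Matrix.mul_diagonal, Matrix.diagonal_mul]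
  cases k using Fin.cases with
  | zero =>
    cases j using Fin.cases with
    | zero =>
      simp [complexHessian, borderedHessian, wirtingerDBar_ambientPotential_zero hdiff,
        wirtingerD_head_mul_comp_succ_zero (hdiff _)]
    | succ j =>
      simp [complexHessian, borderedHessian, wirtingerDBar_ambientPotential_zero hdiff,
        wirtingerD_head_mul_comp_succ_succ (hdiff _)]
  | succ k =>
    cases j using Fin.cases with
    | zero =>
      simp [complexHessian, borderedHessian, wirtingerDBar_ambientPotential_succ hdiff,
        wirtingerD_ambientPotential_zero (hu.differentiable_wirtingerDBar k _), mul_comm]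
    | succ j =>
      simp [complexHessian, borderedHessian, wirtingerDBar_ambientPotential_succ hdiff,
        wirtingerD_ambientPotential_succ (hu.differentiable_wirtingerDBar k _)]
      ring

end AmbientPotential

theorem ambient_hessian_det_general (N : ℕ)
    (u : (Fin N → ℂ) → ℂ) (hu : ContDiff ℝ 2 u)
    (z : Fin (N + 1) → ℂ) :
    Matrix.det (Matrix.of fun j k : Fin (N + 1) =>
        wirtingerD (fun w => wirtingerDBar
            (fun v => v 0 * (starRingEnd ℂ) (v 0) * u (v ∘ Fin.succ)) k w) j z)
      = (z 0 * (starRingEnd ℂ) (z 0)) ^ N *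
        Matrix.det (Matrix.of fun j k : Fin (N + 1) =>
          Fin.cases (motive := fun _ => ℂ)
            (Fin.cases (motive := fun _ => ℂ)
              (u (z ∘ Fin.succ))
              (fun k' => wirtingerDBar u k' (z ∘ Fin.succ)) k)
            (fun j' => Fin.cases (motive := fun _ => ℂ)
              (wirtingerD u j' (z ∘ Fin.succ))
              (fun k' => wirtingerD (fun w => wirtingerDBar u k' w) j'
                (z ∘ Fin.succ)) k) j) := by
  change (complexHessian (ambientPotential u) z).det =
    _ * (borderedHessian u (z ∘ Fin.succ)).det
  rw [complexHessian_ambientPotential hu, Matrix.det_mul, Matrix.det_mul, Matrix.det_diagonal,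
    Matrix.det_diagonal, Fin.prod_cons, Fin.prod_cons]
  simp only [Finset.prod_const, Finset.card_univ, Fintype.card_fin, one_mul]
  ring

/-- Determinant identity for the complex Hessian of the CR ambient Kähler potential
`r(z) = |z₀|² u(z')` (Section 3.1 of Fefferman–Hirachi): `det(∂_j ∂̄_k r) =
|z₀|^{2N} det B`, where `B` is the bordered complex Hessian `[[u, ∂̄_k u],[∂_j u,
∂_j ∂̄_k u]]` of `u` from Fefferman's Monge–Ampère operator. -/
theorem ambient_hessian_det (N : ℕ) (hN : 1 ≤ N)
    (u : (Fin N → ℂ) → ℂ) (hu : ContDiff ℝ 2 u)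
    (z : Fin (N + 1) → ℂ) :
    Matrix.det (Matrix.of fun j k : Fin (N + 1) =>
        wirtingerD (fun w => wirtingerDBar
            (fun v => v 0 * (starRingEnd ℂ) (v 0) * u (v ∘ Fin.succ)) k w) j z)
      = (z 0 * (starRingEnd ℂ) (z 0)) ^ N *
        Matrix.det (Matrix.of fun j k : Fin (N + 1) =>
          Fin.cases (motive := fun _ => ℂ)
            (Fin.cases (motive := fun _ => ℂ)
              (u (z ∘ Fin.succ))
              (fun k' => wirtingerDBar u k' (z ∘ Fin.succ)) k)
            (fun j' => Fin.cases (motive := fun _ => ℂ)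
              (wirtingerD u j' (z ∘ Fin.succ))
              (fun k' => wirtingerD (fun w => wirtingerDBar u k' w) j'
                (z ∘ Fin.succ)) k) j) :=
  ambient_hessian_det_general N u hu z
end
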